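/- In the Voronoi-cell setup along the axis of a hyperbolic isometry ξ (minimal displacement L ≥ 300δ, orbit points xᵢ with projections pᵢ to the axis τ, Voronoi cells Dᵢ = {x : |x xᵢ| ≤ |x xⱼ| for all j}), if x ∈ Dᵢ and p is a projection of x to τ, then p lies between the points p_{i−} and p_{i+} adjacent to pᵢ; in particular |pᵢ p| ≤ L + 56δ + ε. -/

import Mathlib

open Metric Set

variable {X : Type*} [MetricSpace X]

/-- Four-point condition for δ-hyperbolicity. -/
def FourPointHyp (X : Type*) [MetricSpace X] (δ : ℝ) : Prop :=
  ∀ x y z w : X,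
    dist x y + dist z w ≤ max (dist x z + dist y w) (dist y z + dist x w) + 2 * δ

/-- `s` is a geodesic segment from `a` to `b`. -/
def IsGeodSegment {X : Type*} [MetricSpace X] (a b : X) (s : Set X) : Prop :=
  ∃ f : ℝ → X, f 0 = a ∧ f (dist a b) = b ∧
    (∀ u ∈ Icc (0:ℝ) (dist a b), ∀ v ∈ Icc (0:ℝ) (dist a b),
      dist (f u) (f v) = |u - v|) ∧
    s = f '' Icc (0:ℝ) (dist a b)

/-- `X` is a geodesic space. -/
def IsGeodesicSpace (X : Type*) [MetricSpace X] : Prop :=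
  ∀ a b : X, ∃ s : Set X, IsGeodSegment a b s

/-- `τ : ℝ → X` is a geodesic line. -/
def IsGeodLine (τ : ℝ → X) : Prop := ∀ u v : ℝ, dist (τ u) (τ v) = |u - v|

/-- An isometry is hyperbolic if the orbit map `n ↦ ξⁿ(x)` is a quasi-isometric
embedding of `ℤ` into `X`. -/
def IsHypIsom (ξ : X ≃ᵢ X) : Prop :=
  ∃ x : X, ∃ A : ℝ, 0 < A ∧ ∃ B : ℝ, ∀ m n : ℤ,
    A * |(m : ℝ) - (n : ℝ)| - B ≤ dist ((ξ ^ m) x) ((ξ ^ n) x)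

/-- An axis of `ξ`: a geodesic line joining the two fixed points of `ξ` at infinity,
equivalently a geodesic line whose image is at finite Hausdorff distance from its
`ξ`-image. -/
def IsAxis (ξ : X ≃ᵢ X) (τ : ℝ → X) : Prop :=
  IsGeodLine τ ∧ ∃ C : ℝ,
    (∀ t : ℝ, infDist (ξ (τ t)) (range τ) ≤ C) ∧
    (∀ t : ℝ, infDist (τ t) (range fun s => ξ (τ s)) ≤ C)

/-- The orbit points `x₁ = O`, `xᵢ = ξ^{i-1}(O)` for `i > 0`, `xᵢ = ξ^{i}(O)` for
`i < 0`. -/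
noncomputable def orbitPt (ξ : X ≃ᵢ X) (O : X) (i : ℤ) : X :=
  if 0 < i then (ξ ^ (i - 1)) O else (ξ ^ i) O

/-- The Voronoi cell `Dᵢ` of the orbit point `xᵢ`. -/
noncomputable def vorCell (ξ : X ≃ᵢ X) (O : X) (i : ℤ) : Set X :=
  {y : X | ∀ j : ℤ, j ≠ 0 → dist y (orbitPt ξ O i) ≤ dist y (orbitPt ξ O j)}

/-!
Nearest-point projection to a geodesic line is coarsely well behaved in a δ-hyperbolic space:
going from a point to the line and along it costs at most `4δ` more than the direct path, and
two points whose projections are more than `5δ` apart are joined, up to `10δ`, by a path through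
their projections. By stability of geodesics `ξ` moves its axis `τ` within `10δ` of itself, so a
point at distance `D` from `τ` is displaced by at least `2D + L - 50δ`. The orbit points, which
are displaced by at most `L + ε`, therefore lie within `25δ + ε/2` of `τ`; consecutive
projections are `L` apart up to `O(δ)`, and in order along `τ` because
`|x ξ²x| ≥ L + |x ξx| - 4δ`. A point of the Voronoi cell of `xᵢ` is, up to `O(δ)`, no farther
along `τ` from `pᵢ` than from `p_{i±1}`, which traps its projection between `p_{i-1}` and `p_{i+1}`.
-/

def IsProjection (σ : ℝ → X) (x : X) (c : ℝ) : Prop := ∀ t, dist x (σ c) ≤ dist x (σ t)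

section GeodLine

variable {σ : ℝ → X} {x : X} {c : ℝ}

theorem IsGeodLine.isometry (hσ : IsGeodLine σ) : Isometry σ :=
  Isometry.of_dist_eq fun u v => by rw [hσ, Real.dist_eq]

theorem IsGeodLine.exists_isProjection (hσ : IsGeodLine σ) (x : X) :
    ∃ c, IsProjection σ x c := by
  refine (continuous_const.dist hσ.isometry.continuous).exists_forall_le ?_
  refine Filter.tendsto_atTop_mono (fun t => ?_) (Filter.tendsto_atTop_add_const_right _
    (-dist x (σ 0)) (tendsto_dist_right_cocompact_atTop 0))
  have h := dist_triangle (σ t) x (σ 0)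
  rw [hσ, ← Real.dist_eq, dist_comm (σ t)] at h
  linarith

theorem isProjection_of_dist_eq_infDist (h : dist x (σ c) = infDist x (range σ)) :
    IsProjection σ x c :=
  fun t => h ▸ infDist_le_dist_of_mem (mem_range_self t)

theorem IsProjection.infDist_eq (h : IsProjection σ x c) :
    infDist x (range σ) = dist x (σ c) :=
  le_antisymm (infDist_le_dist_of_mem (mem_range_self c))
    ((le_infDist (range_nonempty σ)).2 (by rintro _ ⟨t, rfl⟩; exact h t))

theorem IsGeodLine.abs_dist_sub_abs_sub_le (hσ : IsGeodLine σ) (x x' : X) (a b : ℝ) :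
    |dist x x' - (|a - b|)| ≤ dist x (σ a) + dist x' (σ b) := by
  simpa only [Real.dist_eq, hσ a b] using dist_dist_dist_le x x' (σ a) (σ b)

end GeodLine

theorem IsGeodesicSpace.exists_midpoint (hgeo : IsGeodesicSpace X) (a b : X) :
    ∃ m, dist a m = dist a b / 2 ∧ dist m b = dist a b / 2 := by
  obtain ⟨-, f, hf0, hfd, hf, -⟩ := hgeo a b
  have h0 : (0 : ℝ) ∈ Icc 0 (dist a b) := ⟨le_rfl, dist_nonneg⟩
  have hd : dist a b ∈ Icc 0 (dist a b) := ⟨dist_nonneg, le_rfl⟩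
  have hm : dist a b / 2 ∈ Icc 0 (dist a b) :=
    ⟨by positivity, by linarith [@dist_nonneg _ _ a b]⟩
  refine ⟨f (dist a b / 2), ?_, ?_⟩
  · have h := hf 0 h0 _ hm
    rwa [hf0, zero_sub, abs_neg, abs_of_nonneg hm.1] at h
  · have h := hf _ hm _ hd
    rw [hfd, abs_of_nonpos (by linarith [hm.2])] at h
    rw [h]; ring

theorem exists_abs_sub_eq {b c r : ℝ} (hr : 0 ≤ r) (hrT : r ≤ |c - b|) :
    ∃ u, |u - c| = r ∧ |u - b| = |c - b| - r := by
  rcases le_total c b with hcb | hbc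
  · refine ⟨c + r, by simp [abs_of_nonneg hr], ?_⟩
    rw [abs_of_nonpos (by linarith)] at hrT ⊢
    rw [abs_of_nonpos (by linarith)]; ring
  · refine ⟨c - r, by simp [abs_of_nonneg hr], ?_⟩
    rw [abs_of_nonneg (by linarith)] at hrT ⊢
    rw [abs_of_nonneg (by linarith)]; ring

theorem min_le_and_le_max_of_gaps {δ ε L a b c s : ℝ} (hεδ : ε < δ)
    (hL : 300 * δ ≤ L)
    (hab₁ : L - 50 * δ - ε ≤ |a - b|) (hab₂ : |a - b| ≤ L + 50 * δ + 2 * ε)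
    (hbc₁ : L - 50 * δ - ε ≤ |b - c|) (hbc₂ : |b - c| ≤ L + 50 * δ + 2 * ε)
    (hac : 2 * L - 54 * δ - ε ≤ |a - c|)
    (hsa : |s - b| ≤ |s - a| + 54 * δ + ε) (hsc : |s - b| ≤ |s - c| + 54 * δ + ε) :
    min a c ≤ s ∧ s ≤ max a c ∧ |b - s| ≤ L + 56 * δ + ε := by
  wlog hle : a ≤ c generalizing a c
  · rw [abs_sub_comm] at hab₁ hab₂ hbc₁ hbc₂ hac
    obtain ⟨h₁, h₂, h₃⟩ := this hbc₁ hbc₂ hab₁ hab₂ hac hsc hsa (le_of_not_ge hle)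
    exact ⟨min_comm a c ▸ h₁, max_comm a c ▸ h₂, h₃⟩
  rw [min_eq_left hle, max_eq_right hle]
  rw [abs_of_nonpos (by linarith)] at hac
  have hab : a ≤ b := by
    by_contra! h
    rw [abs_of_nonpos (by linarith)] at hbc₂
    linarith
  have hbc : b ≤ c := by
    by_contra! h
    rw [abs_of_nonpos (by linarith)] at hab₂
    linarith
  rw [abs_of_nonpos (by linarith)] at hab₁ hab₂
  rw [abs_of_nonpos (by linarith)] at hbc₁ hbc₂
  have has : a ≤ s := by
    by_contra! h
    rw [abs_of_nonpos (by linarith), abs_of_nonpos (by linarith)] at hsa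
    linarith
  have hsc' : s ≤ c := by
    by_contra! h
    rw [abs_of_nonneg (by linarith), abs_of_nonneg (by linarith)] at hsc
    linarith
  exact ⟨has, hsc', abs_le.2 ⟨by linarith, by linarith⟩⟩

namespace FourPointHyp

variable {δ : ℝ} (hyp : FourPointHyp X δ)
include hyp

theorem nonneg (x : X) : 0 ≤ δ := by
  simpa using hyp x x x x

section Projection

variable {σ : ℝ → X} (hσ : IsGeodLine σ)
include hσ

theorem dist_add_abs_sub_le {x : X} {c : ℝ} (hc : IsProjection σ x c) (b : ℝ) :
    dist x (σ c) + |c - b| ≤ dist x (σ b) + 4 * δ := by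
  have h₁ := dist_triangle x (σ c) (σ b)
  have h₂ := dist_triangle x (σ b) (σ c)
  rw [hσ] at h₁ h₂
  rw [abs_sub_comm] at h₂
  -- `σ u` lies between `σ c` and `σ b`, at distance `(x | σ b)_{σ c}` from `σ c`; the two
  -- sums on the right of the four-point condition at `x, σ u, σ c, σ b` then coincide.
  obtain ⟨u, hu, hub⟩ := exists_abs_sub_eq (b := b) (c := c)
    (r := (dist x (σ c) + |c - b| - dist x (σ b)) / 2) (by linarith) (by linarith)
  have key := hyp x (σ u) (σ c) (σ b)
  rw [hσ u c, hσ u b, hσ c b, hu, hub, max_eq_left (by linarith)] at key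
  linarith [hc u]

theorem dist_add_dist_add_abs_sub_le {x y : X} {cx cy : ℝ} (hx : IsProjection σ x cx)
    (hy : IsProjection σ y cy) (hgap : 5 * δ < |cx - cy|) :
    dist x (σ cx) + dist y (σ cy) + |cx - cy| ≤ dist x y + 10 * δ := by
  have hx' := hyp.dist_add_abs_sub_le hσ hx cy
  have hy' := hyp.dist_add_abs_sub_le hσ hy cx
  have key := hyp x (σ cy) y (σ cx)
  rw [hσ, abs_sub_comm cy, dist_comm (σ cy)] at key
  rw [abs_sub_comm cy] at hy'
  rcases max_cases (dist x y + |cx - cy|) (dist y (σ cy) + dist x (σ cx)) with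
    ⟨hm, _⟩ | ⟨hm, _⟩ <;> linarith

theorem abs_sub_le_of_dist_le {y x x' : X} {s : ℝ} (hs : IsProjection σ y s)
    (h : dist y x ≤ dist y x') (a b : ℝ) :
    |s - a| ≤ |s - b| + dist x (σ a) + dist x' (σ b) + 4 * δ := by
  have h₁ := hyp.dist_add_abs_sub_le hσ hs a
  have h₂ := dist_triangle y x (σ a)
  have h₃ := dist_triangle4 y (σ s) (σ b) x'
  rw [hσ, dist_comm (σ b)] at h₃
  linarith

end Projection

theorem infDist_le_of_forall_infDist_le {σ ρ : ℝ → X} (hσ : IsGeodLine σ) (hρ : IsGeodLine ρ)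
    {C : ℝ} (hC : ∀ t, infDist (σ t) (range ρ) ≤ C) (t : ℝ) :
    infDist (σ t) (range ρ) ≤ 10 * δ := by
  have hC0 : 0 ≤ C := infDist_nonneg.trans (hC t)
  have hδ := hyp.nonneg (σ t)
  -- `σ t` lies on `σ` between `σ (t ± R)`, whose projections are far from that of `σ t`;
  -- passing through `ρ` costs that detour `2 * dist (σ t) (ρ c)`, which is at most `20δ`.
  set R := 2 * C + 5 * δ + 1
  have hR : 0 ≤ R := by positivity
  obtain ⟨c, hc⟩ := hρ.exists_isProjection (σ t)
  obtain ⟨a, ha⟩ := hρ.exists_isProjection (σ (t - R))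
  obtain ⟨b, hb⟩ := hρ.exists_isProjection (σ (t + R))
  have hDc : dist (σ t) (ρ c) ≤ C := hc.infDist_eq ▸ hC t
  have hDa : dist (σ (t - R)) (ρ a) ≤ C := ha.infDist_eq ▸ hC _
  have hDb : dist (σ (t + R)) (ρ b) ≤ C := hb.infDist_eq ▸ hC _
  have h₁ : dist (σ t) (σ (t - R)) = R := by rw [hσ, sub_sub_cancel, abs_of_nonneg hR]
  have h₂ : dist (σ t) (σ (t + R)) = R := by
    rw [hσ, sub_add_cancel_left, abs_neg, abs_of_nonneg hR]
  have h₃ : dist (σ (t - R)) (σ (t + R)) = 2 * R := by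
    rw [hσ, show t - R - (t + R) = -(2 * R) by ring, abs_neg, abs_of_nonneg (by positivity)]
  have hca := abs_le.1 (hρ.abs_dist_sub_abs_sub_le (σ t) (σ (t - R)) c a)
  have hcb := abs_le.1 (hρ.abs_dist_sub_abs_sub_le (σ t) (σ (t + R)) c b)
  have hab := abs_le.1 (hρ.abs_dist_sub_abs_sub_le (σ (t - R)) (σ (t + R)) a b)
  have hSa := hyp.dist_add_dist_add_abs_sub_le hρ hc ha (by linarith)
  have hSb := hyp.dist_add_dist_add_abs_sub_le hρ hc hb (by linarith)
  rw [h₁] at hca hSa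
  rw [h₂] at hcb hSb
  rw [h₃] at hab
  rw [hc.infDist_eq]
  linarith [abs_sub_le a c b, abs_sub_comm a c]

theorem add_dist_le_dist_apply_apply (hgeo : IsGeodesicSpace X) (ξ : X ≃ᵢ X) {L : ℝ}
    (hξ : ∀ x, L ≤ dist x (ξ x)) (hL : 4 * δ < L) (z : X) :
    L + dist z (ξ z) ≤ dist z (ξ (ξ z)) + 4 * δ := by
  -- Apply the four-point condition around the midpoint `m` of `ξ z` and `z`, using that
  -- `m` itself is displaced by at least `L`.
  obtain ⟨m, hm₁, hm₂⟩ := hgeo.exists_midpoint (ξ z) z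
  obtain ⟨w, hw⟩ : ∃ w, dist (ξ z) z = w := ⟨_, rfl⟩
  rw [hw] at hm₁ hm₂
  have d₁ : dist m (ξ z) = w / 2 := by rw [dist_comm, hm₁]
  have d₂ : dist (ξ m) (ξ z) = w / 2 := by rw [ξ.dist_eq, hm₂]
  have d₃ : dist (ξ m) (ξ (ξ z)) = w / 2 := by rw [ξ.dist_eq, d₁]
  have d₄ : dist (ξ (ξ z)) (ξ z) = w := by rw [ξ.dist_eq, hw]
  have k₁ := hyp m (ξ (ξ z)) z (ξ z)
  have k₂ := hyp m (ξ m) (ξ (ξ z)) (ξ z)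
  rw [hm₂, d₁, d₄, dist_comm (ξ (ξ z)) z, dist_comm z, hw] at k₁
  rw [d₁, d₂, d₃, d₄] at k₂
  rw [dist_comm z, hw]
  have hm := hξ m
  have hδ := hyp.nonneg z
  rcases max_cases (dist m (ξ (ξ z)) + w / 2) (w / 2 + w / 2) with ⟨e₂, _⟩ | ⟨e₂, _⟩ <;>
    rcases max_cases (w / 2 + w) (dist z (ξ (ξ z)) + w / 2) with ⟨e₁, _⟩ | ⟨e₁, _⟩ <;>
    linarith

variable {τ : ℝ → X} (hτ : IsGeodLine τ)
include hτ

theorem two_mul_infDist_add_le_dist (ξ : X ≃ᵢ X) {L : ℝ} (hξ : ∀ x, L ≤ dist x (ξ x))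
    (hL : 35 * δ < L) (h₁ : ∀ u, infDist (ξ (τ u)) (range τ) ≤ 10 * δ)
    (h₂ : ∀ u, infDist (ξ.symm (τ u)) (range τ) ≤ 10 * δ) (z : X) :
    2 * infDist z (range τ) + L ≤ dist z (ξ z) + 50 * δ := by
  have hδ := hyp.nonneg z
  obtain ⟨c, hc⟩ := hτ.exists_isProjection z
  obtain ⟨c', hc'⟩ := hτ.exists_isProjection (ξ z)
  obtain ⟨e, he⟩ := hτ.exists_isProjection (ξ (τ c))
  have hD : dist z (τ c) ≤ dist (ξ z) (τ c') + 10 * δ := by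
    have h := infDist_le_infDist_add_dist (x := z) (y := ξ.symm (τ c')) (s := range τ)
    rw [hc.infDist_eq, ← ξ.dist_eq z (ξ.symm _), ξ.apply_symm_apply] at h
    linarith [h₂ c']
  have he' : dist (ξ (τ c)) (τ e) ≤ 10 * δ := he.infDist_eq ▸ h₁ c
  have hce : L - 10 * δ ≤ |c - e| := by
    have h := dist_triangle (τ c) (τ e) (ξ (τ c))
    rw [hτ, dist_comm (τ e)] at h
    linarith [hξ (τ c)]
  have hc'e : |c' - e| ≤ 20 * δ := by
    by_contra! hgap
    have h := hyp.dist_add_dist_add_abs_sub_le hτ hc' he (by linarith)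
    rw [ξ.dist_eq] at h
    linarith [dist_nonneg (x := ξ (τ c)) (y := τ e)]
  have hcc' : L - 30 * δ ≤ |c - c'| := by linarith [abs_sub_le c c' e]
  have h := hyp.dist_add_dist_add_abs_sub_le hτ hc hc' (by linarith)
  rw [hc.infDist_eq]
  linarith

theorem min_le_and_le_max_of_isProjection (hgeo : IsGeodesicSpace X) (ξ : X ≃ᵢ X) {L ε : ℝ}
    (hξ : ∀ x, L ≤ dist x (ξ x))
    (hnear : ∀ z, 2 * infDist z (range τ) + L ≤ dist z (ξ z) + 50 * δ)
    (hδ : 0 < δ) (hεδ : ε < δ) (hL : 300 * δ ≤ L) {u : X} (hu : dist u (ξ u) ≤ L + ε)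
    {a b c : ℝ} (ha : dist u (τ a) = infDist u (range τ))
    (hb : dist (ξ u) (τ b) = infDist (ξ u) (range τ))
    (hc : dist (ξ (ξ u)) (τ c) = infDist (ξ (ξ u)) (range τ))
    {y : X} {s : ℝ} (hs : IsProjection τ y s)
    (hyu : dist y (ξ u) ≤ dist y u) (hyu' : dist y (ξ u) ≤ dist y (ξ (ξ u))) :
    min a c ≤ s ∧ s ≤ max a c ∧ |b - s| ≤ L + 56 * δ + ε := by
  have hu' : dist (ξ u) (ξ (ξ u)) = dist u (ξ u) := ξ.dist_eq _ _
  have hu'' := hyp.add_dist_le_dist_apply_apply hgeo ξ hξ (by linarith) u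
  have hLu := hξ u
  have ea := hnear u
  have eb := hnear (ξ u)
  have ec := hnear (ξ (ξ u))
  rw [← ha] at ea
  rw [← hb, hu'] at eb
  rw [← hc, ξ.dist_eq, hu'] at ec
  have gab := abs_le.1 (hτ.abs_dist_sub_abs_sub_le u (ξ u) a b)
  have gbc := abs_le.1 (hτ.abs_dist_sub_abs_sub_le (ξ u) (ξ (ξ u)) b c)
  have gac := abs_le.1 (hτ.abs_dist_sub_abs_sub_le u (ξ (ξ u)) a c)
  rw [hu'] at gbc
  have vab := hyp.abs_sub_le_of_dist_le hτ hs hyu b a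
  have vcb := hyp.abs_sub_le_of_dist_le hτ hs hyu' b c
  exact min_le_and_le_max_of_gaps hεδ hL (by linarith) (by linarith) (by linarith)
    (by linarith) (by linarith) (by linarith) (by linarith)

end FourPointHyp

theorem IsAxis.two_mul_infDist_add_le_dist {δ : ℝ} (hyp : FourPointHyp X δ) {ξ : X ≃ᵢ X}
    {τ : ℝ → X} (hax : IsAxis ξ τ) {L : ℝ} (hξ : ∀ x, L ≤ dist x (ξ x)) (hL : 35 * δ < L)
    (z : X) : 2 * infDist z (range τ) + L ≤ dist z (ξ z) + 50 * δ := by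
  obtain ⟨hτ, C, hC₁, hC₂⟩ := hax
  have hξτ : IsGeodLine (fun u => ξ (τ u)) := fun u v => by rw [ξ.dist_eq, hτ]
  have hξτ' : IsGeodLine (fun u => ξ.symm (τ u)) := fun u v => by rw [ξ.symm.dist_eq, hτ]
  have hC₂' (u : ℝ) : infDist (ξ.symm (τ u)) (range τ) ≤ C := by
    rw [← infDist_image ξ.isometry, ξ.apply_symm_apply, ← range_comp]
    exact hC₂ u
  exact hyp.two_mul_infDist_add_le_dist hτ ξ hξ hL
    (hyp.infDist_le_of_forall_infDist_le hξτ hτ hC₁)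
    (hyp.infDist_le_of_forall_infDist_le hξτ' hτ hC₂') z

section Orbit

variable (ξ : X ≃ᵢ X) (O : X)

theorem zpow_apply_of_eq_add_one {m n : ℤ} (h : m = n + 1) (x : X) :
    (ξ ^ m) x = ξ ((ξ ^ n) x) := by
  rw [h, add_comm, zpow_one_add]; rfl

theorem apply_zpow_apply (n : ℤ) (x : X) : ξ ((ξ ^ n) x) = (ξ ^ n) (ξ x) := by
  rw [← zpow_apply_of_eq_add_one ξ rfl, zpow_add_one]; rfl

theorem orbitPt_succ {i : ℤ} (hi : i ≠ 0) :
    orbitPt ξ O (if i = -1 then 1 else i + 1) = ξ (orbitPt ξ O i) := by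
  unfold orbitPt
  split_ifs <;> first | omega | exact zpow_apply_of_eq_add_one ξ (by omega) O

theorem orbitPt_eq_apply_pred (i : ℤ) :
    orbitPt ξ O i = ξ (orbitPt ξ O (if i = 1 then -1 else i - 1)) := by
  unfold orbitPt
  split_ifs <;> first | omega | exact zpow_apply_of_eq_add_one ξ (by omega) O

theorem dist_orbitPt_apply (i : ℤ) :
    dist (orbitPt ξ O i) (ξ (orbitPt ξ O i)) = dist O (ξ O) := by
  unfold orbitPt
  split_ifs <;> rw [apply_zpow_apply, IsometryEquiv.dist_eq]

end Orbit

theorem stmt12_general {X : Type*} [MetricSpace X] (δ ε L : ℝ)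
    (hδ : 0 < δ) (hεδ : ε < δ)
    (hyp : FourPointHyp X δ) (hgeo : IsGeodesicSpace X)
    (ξ : X ≃ᵢ X) (τ : ℝ → X) (hax : IsAxis ξ τ)
    (hL : L = ⨅ x : X, dist x (ξ x)) (hL300 : 300 * δ ≤ L)
    (O : X) (hO : dist O (ξ O) ≤ L + ε)
    (t : ℤ → ℝ) (p : ℤ → X) (hpt : ∀ i : ℤ, i ≠ 0 → p i = τ (t i))
    (hp : ∀ i : ℤ, i ≠ 0 →
      dist (orbitPt ξ O i) (p i) = infDist (orbitPt ξ O i) (range τ))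
    (i : ℤ) (hi : i ≠ 0) (y : X) (hy : y ∈ vorCell ξ O i)
    (q : X) (hq : q ∈ range τ) (hqproj : dist y q = infDist y (range τ)) :
    (∃ s : ℝ, τ s = q ∧
      min (t (if i = 1 then -1 else i - 1)) (t (if i = -1 then 1 else i + 1)) ≤ s ∧
      s ≤ max (t (if i = 1 then -1 else i - 1)) (t (if i = -1 then 1 else i + 1))) ∧
    dist (p i) q ≤ L + 56 * δ + ε := by
  have hξ (x : X) : L ≤ dist x (ξ x) :=
    hL ▸ ciInf_le ⟨0, by rintro _ ⟨x, rfl⟩; exact dist_nonneg⟩ x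
  have hpτ (j : ℤ) (hj : j ≠ 0) :
      dist (orbitPt ξ O j) (τ (t j)) = infDist (orbitPt ξ O j) (range τ) :=
    hpt j hj ▸ hp j hj
  have hpred : (if i = 1 then -1 else i - 1) ≠ 0 := by split_ifs <;> omega
  have hsucc : (if i = -1 then 1 else i + 1) ≠ 0 := by split_ifs <;> omega
  have hxi := orbitPt_eq_apply_pred ξ O i
  have hxsucc := orbitPt_succ ξ O hi
  have hyi := hy _ hpred
  have hyi' := hy _ hsucc
  have hpi := hpτ i hi
  have hpsucc := hpτ _ hsucc
  rw [hxsucc] at hyi' hpsucc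
  rw [hxi] at hyi hyi' hpi hpsucc
  obtain ⟨s, rfl⟩ := hq
  obtain ⟨h₁, h₂, h₃⟩ := hyp.min_le_and_le_max_of_isProjection hax.1 hgeo ξ hξ
    (hax.two_mul_infDist_add_le_dist hyp hξ (by linarith)) hδ hεδ hL300
    ((dist_orbitPt_apply ξ O _).trans_le hO) (hpτ _ hpred) hpi hpsucc
    (isProjection_of_dist_eq_infDist hqproj) hyi hyi'
  refine ⟨⟨s, rfl, h₁, h₂⟩, ?_⟩
  rwa [hpt i hi, hax.1]

/-- In the Voronoi-cell setup along the axis of a hyperbolic isometry `ξ`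
(`L = dis(ξ) ≥ 300δ`, orbit points `xᵢ` with projections `pᵢ = τ(tᵢ)` to the axis
`τ`, Voronoi cells `Dᵢ`): if `y ∈ Dᵢ` and `q` is a projection of `y` to `τ`, then
`q` lies between the points `p_{i₋}` and `p_{i₊}` adjacent to `pᵢ`; in particular
`|pᵢ q| ≤ L + 56δ + ε`. -/
theorem stmt12 {X : Type*} [MetricSpace X] [ProperSpace X] (δ ε L : ℝ)
    (hδ : 0 < δ) (hε : 0 < ε) (hεδ : ε < δ)
    (hyp : FourPointHyp X δ) (hgeo : IsGeodesicSpace X)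
    (ξ : X ≃ᵢ X) (hhyp : IsHypIsom ξ) (τ : ℝ → X) (hax : IsAxis ξ τ)
    (hL : L = ⨅ x : X, dist x (ξ x)) (hL300 : 300 * δ ≤ L)
    (O : X) (hO : dist O (ξ O) ≤ L + ε)
    (t : ℤ → ℝ) (p : ℤ → X) (hpt : ∀ i : ℤ, i ≠ 0 → p i = τ (t i))
    (hp : ∀ i : ℤ, i ≠ 0 →
      dist (orbitPt ξ O i) (p i) = infDist (orbitPt ξ O i) (range τ))
    (i : ℤ) (hi : i ≠ 0) (y : X) (hy : y ∈ vorCell ξ O i)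
    (q : X) (hq : q ∈ range τ) (hqproj : dist y q = infDist y (range τ)) :
    (∃ s : ℝ, τ s = q ∧
      min (t (if i = 1 then -1 else i - 1)) (t (if i = -1 then 1 else i + 1)) ≤ s ∧
      s ≤ max (t (if i = 1 then -1 else i - 1)) (t (if i = -1 then 1 else i + 1))) ∧
    dist (p i) q ≤ L + 56 * δ + ε :=
  stmt12_general δ ε L hδ hεδ hyp hgeo ξ τ hax hL hL300 O hO t p hpt hp i hi y hy q hq hqproj
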